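/- Let R be an expanding integer (|R| ≥ 2) and B ⊂ ℤ a finite set with 0 ∈ B and gcd(B) = 1, such that (R,B,L) is a Hadamard triple for some L ⊂ ℤ. Then the set 𝒵 = {ξ ∈ ℝ : μ̂(ξ+k) = 0 for all k ∈ ℤ} is empty, where μ = μ(R,B) is the associated self-similar measure. -/

import Mathlib

/-!
The self-similarity of `μ` gives `μ̂(ξ) = m_B(ξ / R) μ̂(ξ / R)`, and the Hadamard property gives
`∑_{ℓ ∈ L} |m_B((ξ + ℓ) / R)|² = 1`. Hence for `ξ ∈ 𝒵` some `(ξ + ℓ) / R` lies in `𝒵` again, so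
multiplication by `R` maps `𝒵 mod ℤ` onto itself. Since `μ` has compact support, `μ̂` is entire and
`𝒵 mod ℤ` is finite, so multiplication by `R` permutes it and `(R^q - 1) 𝒵 ⊆ ℤ` for some `q ≥ 1`.
As `R^q - 1` is prime to `R` and `L` is a set of distinct residues mod `R`, for `ξ ∈ 𝒵` only one
`ℓ ∈ L` has `m_B((ξ + ℓ) / R) ≠ 0`; there `|m_B| = 1`, which forces `(ξ + ℓ) / R ∈ ℤ` because
`0 ∈ B` and `gcd B = 1`. But `𝒵` contains no integer, as `μ̂(0) = 1`.
-/

open scoped BigOperators ENNReal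
open Matrix MeasureTheory

noncomputable section

/-- The one-dimensional Hadamard matrix (1/√N)[e^{2πi b ℓ / R}]_{ℓ∈L, b∈B}. -/
def hMatrix1 (R : ℤ) (B L : Finset ℤ) : Matrix L B ℂ := fun ℓ b =>
  ((1 / Real.sqrt (B.card) : ℝ) : ℂ) *
    Complex.exp (2 * (Real.pi : ℂ) * Complex.I *
      ((((b : ℤ) : ℝ) * ((ℓ : ℤ) : ℝ) / (R : ℝ) : ℝ) : ℂ))

/-- One-dimensional Hadamard triple. -/
def IsHadamardTriple1 (R : ℤ) (B L : Finset ℤ) : Prop :=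
  B.card = L.card ∧ (hMatrix1 R B L)ᴴ * hMatrix1 R B L = 1

/-- One-dimensional Fourier transform of a measure. -/
def ft1 (μ : Measure ℝ) (ξ : ℝ) : ℂ :=
  ∫ x, Complex.exp (-(2 * (Real.pi : ℂ) * Complex.I * ((ξ * x : ℝ) : ℂ))) ∂μ

open Real ProbabilityTheory
open scoped FourierTransform

/-- The mask `m_B`, i.e. the Fourier transform of the uniform probability measure on `B`. -/
def mask (B : Finset ℤ) (t : ℝ) : ℂ := (B.card : ℂ)⁻¹ * ∑ b ∈ B, (𝐞 (-(b * t)) : ℂ)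

def IsSelfSimilar (R : ℤ) (B : Finset ℤ) (μ : Measure ℝ) : Prop :=
  μ = (B.card : ℝ≥0∞)⁻¹ • ∑ b ∈ B, μ.map (fun x : ℝ => (x + (b : ℝ)) / (R : ℝ))

/-- The set `𝒵`. -/
def periodicZeros (μ : Measure ℝ) : Set ℝ := {ξ | ∀ k : ℤ, ft1 μ (ξ + k) = 0}

theorem Set.Finite.exists_pos_iterate_eq_of_subset_image {α : Type*} {f : α → α} {S : Set α}
    (hS : S.Finite) (h : S ⊆ f '' S) : ∃ q, 0 < q ∧ ∀ x ∈ S, f^[q] x = x := by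
  have himage : f '' S = S :=
    (Set.eq_of_subset_of_ncard_le h (Set.ncard_image_le hS) (hS.image f)).symm
  have hmaps : Set.MapsTo f S S := (Set.mapsTo_image f S).mono_right himage.subset
  have hbij : Set.BijOn f S S := (hS.surjOn_iff_bijOn_of_mapsTo hmaps).1 h
  have := hS.to_subtype
  obtain ⟨q, hq, hσ⟩ := (isOfFinOrder_of_finite (hbij.equiv f)).exists_pow_eq_one
  refine ⟨q, hq, fun x hx => ?_⟩
  have := congrArg (fun σ : Equiv.Perm S => (σ ⟨x, hx⟩ : α)) hσ
  simp only [Equiv.Perm.coe_pow] at this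
  simpa [Set.BijOn.equiv, hmaps.iterate_restrict] using this

theorem Matrix.sum_norm_sq_mulVec_of_conjTranspose_mul_self_eq_one {m n : Type*} [Fintype m]
    [Fintype n] [DecidableEq n] {A : Matrix m n ℂ} (hA : Aᴴ * A = 1) (v : n → ℂ) :
    ∑ i, ‖(A *ᵥ v) i‖ ^ 2 = ∑ j, ‖v j‖ ^ 2 := by
  have h : star (A *ᵥ v) ⬝ᵥ (A *ᵥ v) = star v ⬝ᵥ v := by
    rw [star_mulVec, dotProduct_mulVec, vecMul_vecMul, hA, vecMul_one]
  simp only [dotProduct, Pi.star_apply, Complex.star_def, Complex.conj_mul'] at h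
  exact_mod_cast h

theorem card_smul_eq_sum_of_norm_sum_eq_card {ι F : Type*} [NormedAddCommGroup F]
    [InnerProductSpace ℝ F] {s : Finset ι} {z : ι → F} (hz : ∀ i ∈ s, ‖z i‖ = 1)
    (h : ‖∑ i ∈ s, z i‖ = s.card) {i : ι} (hi : i ∈ s) : (s.card : ℝ) • z i = ∑ j ∈ s, z j := by
  set S := ∑ j ∈ s, z j
  have hle : ∀ j ∈ s, inner ℝ (z j) S ≤ ‖S‖ := fun j hj =>
    (real_inner_le_norm _ _).trans_eq (by rw [hz j hj, one_mul])
  have hsum : ∑ j ∈ s, inner ℝ (z j) S = ∑ j ∈ s, ‖S‖ := by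
    rw [← sum_inner, real_inner_self_eq_norm_sq, Finset.sum_const, nsmul_eq_mul, h, sq]
  have hi' := (Finset.sum_eq_sum_iff_of_le hle).1 hsum i hi
  rw [← one_mul ‖S‖, ← hz i hi, inner_eq_norm_mul_iff_real, hz i hi, h, one_smul] at hi'
  exact hi'

theorem exists_gcd_mul_eq_intCast {B : Finset ℤ} {t : ℝ} (h : ∀ b ∈ B, ∃ n : ℤ, b * t = n) :
    ∃ n : ℤ, (B.gcd id : ℤ) * t = n := by
  choose! n hn using h
  obtain ⟨g, hg⟩ := B.gcd_eq_sum_mul id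
  refine ⟨∑ b ∈ B, g b * n b, ?_⟩
  rw [hg]
  push_cast
  rw [Finset.sum_mul]
  refine Finset.sum_congr rfl fun b hb => ?_
  rw [← hn b hb, id]
  ring

theorem cexp_eq_fourierChar (t : ℝ) : Complex.exp (2 * π * Complex.I * t) = 𝐞 t := by
  rw [Real.fourierChar_apply]
  push_cast
  ring_nf

theorem fourierChar_intCast (n : ℤ) : 𝐞 n = 1 := by
  rw [Real.fourierChar_apply', Circle.exp_two_pi_mul_int]

theorem fourierChar_eq_one_iff {t : ℝ} : 𝐞 t = 1 ↔ ∃ n : ℤ, t = n := by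
  rw [Real.fourierChar_apply', Circle.exp_eq_one]
  refine exists_congr fun n => ?_
  constructor <;> intro h <;> nlinarith [Real.pi_pos]

theorem star_fourierChar (t : ℝ) : star (𝐞 t : ℂ) = 𝐞 (-t) := by
  rw [AddChar.map_neg_eq_inv, Circle.coe_inv_eq_conj, Complex.star_def]

section Mask

variable {B : Finset ℤ}

theorem mask_add_intCast (t : ℝ) (k : ℤ) : mask B (t + k) = mask B t := by
  unfold mask
  congr 1
  refine Finset.sum_congr rfl fun b _ => ?_
  rw [show -(b * (t + k)) = -(b * t) + ((-(b * k) : ℤ) : ℝ) by push_cast; ring,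
    AddChar.map_add_eq_mul, fourierChar_intCast, mul_one]

theorem mask_intCast (hB : B.Nonempty) (k : ℤ) : mask B k = 1 := by
  have hk := mask_add_intCast (B := B) 0 k
  rw [zero_add] at hk
  rw [hk, mask]
  simp [hB.card_pos.ne']

theorem exists_intCast_eq_of_norm_mask_eq_one (h0 : 0 ∈ B) (hgcd : B.gcd id = 1) {t : ℝ}
    (h : ‖mask B t‖ = 1) : ∃ n : ℤ, t = n := by
  have hN : (B.card : ℝ) ≠ 0 := Nat.cast_ne_zero.2 (Finset.card_ne_zero_of_mem h0)
  have hsum : ‖∑ b ∈ B, (𝐞 (-(b * t)) : ℂ)‖ = B.card := by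
    rwa [mask, norm_mul, norm_inv, Complex.norm_natCast, inv_mul_eq_iff_eq_mul₀ hN, mul_one] at h
  have hint : ∀ b ∈ B, ∃ n : ℤ, b * t = n := by
    intro b hb
    have heq := (card_smul_eq_sum_of_norm_sum_eq_card (fun b _ => Circle.norm_coe _) hsum hb).trans
      (card_smul_eq_sum_of_norm_sum_eq_card (fun b _ => Circle.norm_coe _) hsum h0).symm
    rw [smul_right_inj hN] at heq
    simp only [Int.cast_zero, zero_mul, neg_zero, AddChar.map_zero_eq_one, Circle.coe_one] at heq
    obtain ⟨n, hn⟩ := fourierChar_eq_one_iff.1 (Circle.coe_eq_one.1 heq)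
    exact ⟨-n, by push_cast; linarith⟩
  simpa [hgcd] using exists_gcd_mul_eq_intCast hint

end Mask

namespace IsHadamardTriple1

variable {R : ℤ} {B L : Finset ℤ}

theorem sum_norm_mask_sq (hH : IsHadamardTriple1 R B L) (hB : B.Nonempty) (x : ℝ) :
    ∑ ℓ ∈ L, ‖mask B ((x + ℓ) / R)‖ ^ 2 = 1 := by
  set c : ℂ := ((1 / √(B.card : ℝ) : ℝ) : ℂ)
  have hc : c * c = (B.card : ℂ)⁻¹ := by
    rw [← Complex.ofReal_mul, one_div, ← mul_inv, Real.mul_self_sqrt (Nat.cast_nonneg _)]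
    push_cast
    rfl
  set v : B → ℂ := fun b => c * 𝐞 (b * x / R)
  have hv (ℓ : L) : (hMatrix1 R B L *ᵥ v) ℓ = star (mask B ((x + ℓ) / R)) := by
    simp only [mulVec, dotProduct, hMatrix1, v, mask, star_mul', star_sum, star_fourierChar,
      cexp_eq_fourierChar, star_inv₀, star_natCast, neg_neg, Finset.mul_sum]
    rw [← Finset.sum_coe_sort B]
    refine Finset.sum_congr rfl fun b _ => ?_
    rw [← hc, mul_mul_mul_comm, ← Circle.coe_mul, ← AddChar.map_add_eq_mul]
    congr 3
    ring
  have hnorm := Matrix.sum_norm_sq_mulVec_of_conjTranspose_mul_self_eq_one hH.2 v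
  simp only [hv, norm_star, v, norm_mul, Circle.norm_coe, mul_one] at hnorm
  rw [← Finset.sum_coe_sort L, hnorm, Finset.sum_const, Finset.card_univ, Fintype.card_coe, sq,
    ← norm_mul, hc, norm_inv, Complex.norm_natCast, nsmul_eq_mul,
    mul_inv_cancel₀ (Nat.cast_ne_zero.2 hB.card_pos.ne')]

theorem exists_mask_ne_zero (hH : IsHadamardTriple1 R B L) (hB : B.Nonempty) (x : ℝ) :
    ∃ ℓ ∈ L, mask B ((x + ℓ) / R) ≠ 0 := by
  by_contra! h
  have hsum := hH.sum_norm_mask_sq hB x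
  rw [Finset.sum_eq_zero fun ℓ hℓ => by rw [h ℓ hℓ, norm_zero, sq, zero_mul]] at hsum
  exact zero_ne_one hsum

theorem norm_mask_eq_one_of_unique (hH : IsHadamardTriple1 R B L) (hB : B.Nonempty) {x : ℝ}
    {ℓ₀ : ℤ} (hℓ₀ : ℓ₀ ∈ L) (huniq : ∀ ℓ ∈ L, mask B ((x + ℓ) / R) ≠ 0 → ℓ = ℓ₀) :
    ‖mask B ((x + ℓ₀) / R)‖ = 1 := by
  have hsum := hH.sum_norm_mask_sq hB x
  rw [Finset.sum_eq_single_of_mem ℓ₀ hℓ₀ fun ℓ hℓ hne => by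
    rw [not_imp_comm.1 (huniq ℓ hℓ) hne, norm_zero, sq, zero_mul]] at hsum
  exact (pow_eq_one_iff_of_nonneg (norm_nonneg _) two_ne_zero).1 hsum

theorem eq_of_dvd_sub (hH : IsHadamardTriple1 R B L) (hB : B.Nonempty) (hR : R ≠ 0)
    {ℓ ℓ' : ℤ} (hℓ : ℓ ∈ L) (hℓ' : ℓ' ∈ L) (hdvd : R ∣ ℓ - ℓ') : ℓ = ℓ' := by
  -- At `x = -ℓ'` the terms of `ℓ` and `ℓ'` in `sum_norm_mask_sq` are both `‖m_B(integer)‖² = 1`.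
  by_contra hne
  obtain ⟨m, hm⟩ := hdvd
  have hterm : ∀ k ∈ ({ℓ, ℓ'} : Finset ℤ), ‖mask B ((-ℓ' + k) / R)‖ ^ 2 = 1 := by
    have hm' : ((-ℓ' + ℓ : ℤ) : ℝ) / R = m := by
      rw [show -ℓ' + ℓ = R * m by linarith]
      push_cast
      field_simp
    simp only [Finset.mem_insert, Finset.mem_singleton, forall_eq_or_imp, forall_eq]
    push_cast at hm'
    rw [hm', neg_add_cancel, zero_div, ← Int.cast_zero, mask_intCast hB, mask_intCast hB]
    simp
  have hle := Finset.sum_le_sum_of_subset_of_nonneg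
    (f := fun k : ℤ => ‖mask B ((-ℓ' + k) / R)‖ ^ 2)
    (Finset.insert_subset hℓ (Finset.singleton_subset_iff.2 hℓ')) fun _ _ _ => by positivity
  rw [Finset.sum_congr rfl hterm, hH.sum_norm_mask_sq hB, Finset.sum_const,
    Finset.card_pair hne] at hle
  norm_num at hle

end IsHadamardTriple1

theorem ft1_eq_integral_fourierChar (μ : Measure ℝ) (ξ : ℝ) :
    ft1 μ ξ = ∫ x, (𝐞 (-(ξ * x)) : ℂ) ∂μ := by
  simp only [ft1, ← cexp_eq_fourierChar]
  push_cast
  ring_nf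

theorem ft1_zero (μ : Measure ℝ) [IsProbabilityMeasure μ] : ft1 μ 0 = 1 := by
  simp [ft1]

theorem ft1_eq_complexMGF (μ : Measure ℝ) (ξ : ℝ) :
    ft1 μ ξ = complexMGF id μ (-(2 * π * Complex.I * ξ)) := by
  simp only [ft1, complexMGF, id]
  congr 1 with x
  push_cast
  ring_nf

section CompactSupport

variable {μ : Measure ℝ} {M : ℝ}

theorem integrableExpSet_id_eq_univ [IsFiniteMeasure μ] (hM : ∀ᵐ x ∂μ, |x| ≤ M) :
    integrableExpSet id μ = Set.univ := by
  refine Set.eq_univ_of_forall fun t => Integrable.of_bound (by fun_prop) (exp (|t| * M)) ?_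
  filter_upwards [hM] with x hx
  rw [Real.norm_eq_abs, abs_of_pos (exp_pos _), exp_le_exp]
  calc t * x ≤ |t| * |x| := (le_abs_self _).trans_eq (abs_mul t x)
    _ ≤ |t| * M := mul_le_mul_of_nonneg_left hx (abs_nonneg t)

theorem analyticOnNhd_ft1 [IsFiniteMeasure μ] (hM : ∀ᵐ x ∂μ, |x| ≤ M) : AnalyticOnNhd ℝ (ft1 μ) Set.univ := by
  intro ξ _
  have hmgf : AnalyticAt ℂ (complexMGF id μ) (-(2 * π * Complex.I * ξ)) :=
    analyticAt_complexMGF (by simp [integrableExpSet_id_eq_univ hM])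
  have hlin : AnalyticAt ℝ (fun ξ : ℝ => -(2 * π * Complex.I * ξ)) ξ :=
    (analyticAt_const.mul (Complex.ofRealCLM.analyticAt ξ)).neg
  rw [funext (ft1_eq_complexMGF μ)]
  exact hmgf.restrictScalars.comp (f := fun ξ : ℝ => -(2 * π * Complex.I * ξ)) hlin

theorem finite_setOf_ft1_eq_zero [IsProbabilityMeasure μ] (hM : ∀ᵐ x ∂μ, |x| ≤ M) {K : Set ℝ}
    (hK : IsCompact K) : {ξ ∈ K | ft1 μ ξ = 0}.Finite := by
  by_contra hinf
  obtain ⟨x, -, hx⟩ := Set.Infinite.exists_accPt_of_subset_isCompact hinf hK fun _ h => h.1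
  have hzero := (analyticOnNhd_ft1 hM).eqOn_zero_of_preconnected_of_frequently_eq_zero
    isPreconnected_univ (Set.mem_univ x)
    ((accPt_iff_frequently_nhdsNE.mp hx).mono fun _ h => h.2)
  simpa [ft1_zero] using hzero (Set.mem_univ 0)

end CompactSupport

namespace IsSelfSimilar

variable {R : ℤ} {B : Finset ℤ} {μ : Measure ℝ}

theorem ft1_eq_mask_mul [IsFiniteMeasure μ] (hμ : IsSelfSimilar R B μ) (ξ : ℝ) :
    ft1 μ ξ = mask B (ξ / R) * ft1 μ (ξ / R) := by
  have hterm (b : ℤ) : ∫ x, (𝐞 (-(ξ * x)) : ℂ) ∂(μ.map fun x : ℝ => (x + b) / R)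
      = 𝐞 (-(b * (ξ / R))) * ft1 μ (ξ / R) := by
    rw [integral_map (by fun_prop) (by fun_prop), ft1_eq_integral_fourierChar,
      ← integral_const_mul]
    congr 1 with x
    rw [← Circle.coe_mul, ← AddChar.map_add_eq_mul]
    ring_nf
  rw [ft1_eq_integral_fourierChar]
  conv_lhs => rw [hμ]
  rw [integral_smul_measure, integral_finsetSum_measure fun b _ =>
    Integrable.of_bound (by fun_prop) 1 (.of_forall fun x => (Circle.norm_coe _).le)]
  simp_rw [hterm, ← Finset.sum_mul, mask, ENNReal.toReal_inv, ENNReal.toReal_natCast,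
    Complex.real_smul, Complex.ofReal_inv, Complex.ofReal_natCast, mul_assoc]

theorem measure_lt_abs_le (hμ : IsSelfSimilar R B μ) (hR : 2 ≤ |R|) (hB : B.Nonempty)
    {β t : ℝ} (hβ : ∀ b ∈ B, |(b : ℝ)| ≤ β) (ht : β + 1 ≤ t) :
    μ {x | t < |x|} ≤ μ {x | t + 1 < |x|} := by
  obtain ⟨b₀, hb₀⟩ := hB
  have ht0 : 0 ≤ t := by linarith [abs_nonneg (b₀ : ℝ), hβ b₀ hb₀]
  have hR' : (2 : ℝ) ≤ |(R : ℝ)| := by exact_mod_cast hR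
  have hpre : ∀ b ∈ B,
      μ.map (fun x : ℝ => (x + b) / R) {x | t < |x|} ≤ μ {x | t + 1 < |x|} := by
    intro b hb
    rw [Measure.map_apply (by fun_prop) (measurableSet_lt measurable_const measurable_abs)]
    refine measure_mono fun x hx => ?_
    simp only [Set.mem_preimage, Set.mem_ofPred_eq, abs_div] at hx ⊢
    rw [lt_div_iff₀ (by linarith)] at hx
    nlinarith [hβ b hb, abs_add_le x b]
  conv_lhs => rw [hμ]
  rw [Measure.smul_apply, Measure.finsetSum_apply, smul_eq_mul]
  calc (B.card : ℝ≥0∞)⁻¹ * ∑ b ∈ B, μ.map (fun x : ℝ => (x + b) / R) {x | t < |x|}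
      ≤ (B.card : ℝ≥0∞)⁻¹ * ∑ _b ∈ B, μ {x | t + 1 < |x|} :=
        mul_le_mul_right (Finset.sum_le_sum hpre) _
    _ = μ {x | t + 1 < |x|} := by
      rw [Finset.sum_const, nsmul_eq_mul, ← mul_assoc, ENNReal.inv_mul_cancel
        (by simpa using Finset.card_ne_zero_of_mem hb₀) (ENNReal.natCast_ne_top _), one_mul]

theorem ae_abs_le [IsFiniteMeasure μ] (hμ : IsSelfSimilar R B μ) (hR : 2 ≤ |R|)
    (hB : B.Nonempty) : ∃ M, ∀ᵐ x ∂μ, |x| ≤ M := by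
  set β := ∑ b ∈ B, |(b : ℝ)|
  have hβ : ∀ b ∈ B, |(b : ℝ)| ≤ β := fun b hb =>
    Finset.single_le_sum (f := fun b : ℤ => |(b : ℝ)|) (fun _ _ => abs_nonneg _) hb
  set s : ℕ → Set ℝ := fun n => {x | β + 1 + n < |x|}
  have hmono : ∀ n, μ (s 0) ≤ μ (s n) := by
    intro n
    induction n with
    | zero => rfl
    | succ n ih =>
      refine ih.trans ((hμ.measure_lt_abs_le hR hB hβ (by simp)).trans_eq ?_)
      simp only [s]
      push_cast
      ring_nf
  have hanti : Antitone s := fun m n hmn x hx => by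
    simp only [s, Set.mem_ofPred_eq] at hx ⊢
    have : (m : ℝ) ≤ n := by exact_mod_cast hmn
    linarith
  have hempty : ⋂ n, s n = ∅ := by
    refine Set.eq_empty_of_forall_notMem fun x hx => ?_
    obtain ⟨n, hn⟩ := exists_nat_gt |x|
    have := Set.mem_iInter.1 hx n
    simp only [s, Set.mem_ofPred_eq] at this
    linarith [Finset.sum_nonneg fun b (_ : b ∈ B) => abs_nonneg (b : ℝ)]
  have hzero : μ (s 0) = 0 := by
    refine le_antisymm ?_ zero_le
    rw [← measure_empty (μ := μ), ← hempty, hanti.measure_iInter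
      (fun n => (measurableSet_lt measurable_const measurable_abs).nullMeasurableSet)
      ⟨0, measure_ne_top _ _⟩]
    exact le_iInf hmono
  refine ⟨β + 1, ae_iff.2 ?_⟩
  simpa [s, not_le] using hzero

end IsSelfSimilar

section PeriodicZeros

variable {R : ℤ} {B L : Finset ℤ} {μ : Measure ℝ}

theorem intCast_notMem_periodicZeros [IsProbabilityMeasure μ] (n : ℤ) :
    (n : ℝ) ∉ periodicZeros μ := fun h => by
  simpa [ft1_zero] using h (-n)

theorem IsSelfSimilar.div_mem_periodicZeros [IsFiniteMeasure μ] (hμ : IsSelfSimilar R B μ)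
    (hR : R ≠ 0) {ξ : ℝ} (hξ : ξ ∈ periodicZeros μ) (s : ℤ) (hs : mask B ((ξ + s) / R) ≠ 0) :
    (ξ + s) / R ∈ periodicZeros μ := by
  intro m
  have h := hμ.ft1_eq_mask_mul (ξ + ↑(s + R * m))
  rw [hξ, show (ξ + ↑(s + R * m)) / R = (ξ + s) / R + m by push_cast; field_simp; ring,
    mask_add_intCast] at h
  exact (mul_eq_zero.1 h.symm).resolve_left hs

theorem finite_image_periodicZeros [IsProbabilityMeasure μ] {M : ℝ} (hM : ∀ᵐ x ∂μ, |x| ≤ M) :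
    (((↑) : ℝ → AddCircle (1 : ℝ)) '' periodicZeros μ).Finite := by
  refine ((finite_setOf_ft1_eq_zero hM (isCompact_Icc (a := (0 : ℝ)) (b := 1))).image
    ((↑) : ℝ → AddCircle (1 : ℝ))).subset ?_
  rintro _ ⟨ξ, hξ, rfl⟩
  refine ⟨Int.fract ξ, ⟨⟨Int.fract_nonneg _, (Int.fract_lt_one _).le⟩, ?_⟩, AddCircle.coe_fract ξ⟩
  simpa [Int.fract, sub_eq_add_neg] using hξ (-⌊ξ⌋)

theorem exists_isCoprime_mul_eq_intCast_of_mem_periodicZeros [IsProbabilityMeasure μ]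
    (hH : IsHadamardTriple1 R B L) (hB : B.Nonempty) (hμ : IsSelfSimilar R B μ) (hR : R ≠ 0)
    {M : ℝ} (hM : ∀ᵐ x ∂μ, |x| ≤ M) :
    ∃ d : ℤ, IsCoprime R d ∧ ∀ ξ ∈ periodicZeros μ, ∃ n : ℤ, d * ξ = n := by
  have hsurj : (((↑) : ℝ → AddCircle (1 : ℝ)) '' periodicZeros μ) ⊆
      (fun y => R • y) '' (((↑) : ℝ → AddCircle (1 : ℝ)) '' periodicZeros μ) := by
    rintro _ ⟨ξ, hξ, rfl⟩
    obtain ⟨ℓ, -, hℓ⟩ := hH.exists_mask_ne_zero hB ξ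
    refine ⟨_, ⟨_, hμ.div_mem_periodicZeros hR hξ ℓ hℓ, rfl⟩, ?_⟩
    dsimp only
    rw [← AddCircle.coe_zsmul, zsmul_eq_mul, mul_div_cancel₀ _ (Int.cast_ne_zero.2 hR)]
    simp
  obtain ⟨q, hq, hfix⟩ :=
    (finite_image_periodicZeros hM).exists_pos_iterate_eq_of_subset_image hsurj
  refine ⟨R ^ q - 1, ⟨R ^ (q - 1), -1, by rw [← pow_succ, Nat.sub_add_cancel hq]; ring⟩,
    fun ξ hξ => ?_⟩
  have h := hfix _ ⟨ξ, hξ, rfl⟩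
  rw [smul_iterate] at h
  dsimp only at h
  rw [← AddCircle.coe_zsmul, ← sub_eq_zero, ← AddCircle.coe_sub,
    AddCircle.coe_eq_zero_iff] at h
  obtain ⟨n, hn⟩ := h
  refine ⟨n, ?_⟩
  simp only [zsmul_eq_mul] at hn
  push_cast at hn ⊢
  linear_combination -hn

theorem IsHadamardTriple1.eq_of_mask_ne_zero [IsFiniteMeasure μ] (hH : IsHadamardTriple1 R B L)
    (hB : B.Nonempty) (hμ : IsSelfSimilar R B μ) (hR : R ≠ 0) {d : ℤ} (hd : IsCoprime R d)
    (hdZ : ∀ ξ ∈ periodicZeros μ, ∃ n : ℤ, d * ξ = n) {ξ : ℝ} (hξ : ξ ∈ periodicZeros μ)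
    {ℓ ℓ' : ℤ} (hℓ : ℓ ∈ L) (hℓ' : ℓ' ∈ L) (hm : mask B ((ξ + ℓ) / R) ≠ 0)
    (hm' : mask B ((ξ + ℓ') / R) ≠ 0) : ℓ = ℓ' := by
  obtain ⟨n, hn⟩ := hdZ _ (hμ.div_mem_periodicZeros hR hξ ℓ hm)
  obtain ⟨n', hn'⟩ := hdZ _ (hμ.div_mem_periodicZeros hR hξ ℓ' hm')
  refine hH.eq_of_dvd_sub hB hR hℓ hℓ' (hd.dvd_of_dvd_mul_left ⟨n - n', ?_⟩)
  have hR' : (R : ℝ) ≠ 0 := Int.cast_ne_zero.2 hR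
  have : ((d * (ℓ - ℓ') : ℤ) : ℝ) = ((R * (n - n') : ℤ) : ℝ) := by
    push_cast
    field_simp at hn hn'
    linear_combination hn - hn'
  exact_mod_cast this

end PeriodicZeros

/-- in dimension one, a Hadamard triple with 0 ∈ B and gcd(B) = 1 has
𝒵 = ∅, i.e. for every ξ there is an integer k with μ̂(ξ + k) ≠ 0. -/
theorem Z_empty_dim_one (R : ℤ) (hR : 2 ≤ |R|) (B L : Finset ℤ)
    (h0 : (0 : ℤ) ∈ B) (hgcd : B.gcd id = 1)
    (hH : IsHadamardTriple1 R B L)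
    (μ : Measure ℝ) [IsProbabilityMeasure μ]
    (hμ : μ = (B.card : ℝ≥0∞)⁻¹ •
      ∑ b ∈ B, μ.map (fun x : ℝ => (x + (b : ℝ)) / (R : ℝ))) :
    ∀ ξ : ℝ, ∃ k : ℤ, ft1 μ (ξ + (k : ℝ)) ≠ 0 := by
  intro ξ
  by_contra! hξ
  have hB : B.Nonempty := ⟨0, h0⟩
  have hR0 : R ≠ 0 := by rintro rfl; simp at hR
  obtain ⟨M, hM⟩ := IsSelfSimilar.ae_abs_le hμ hR hB
  obtain ⟨d, hd, hdZ⟩ := exists_isCoprime_mul_eq_intCast_of_mem_periodicZeros hH hB hμ hR0 hM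
  obtain ⟨ℓ₀, hℓ₀, hm₀⟩ := hH.exists_mask_ne_zero hB ξ
  have hnorm : ‖mask B ((ξ + ℓ₀) / R)‖ = 1 := hH.norm_mask_eq_one_of_unique hB hℓ₀
    fun ℓ hℓ hm => hH.eq_of_mask_ne_zero hB hμ hR0 hd hdZ hξ hℓ hℓ₀ hm hm₀
  obtain ⟨n, hn⟩ := exists_intCast_eq_of_norm_mask_eq_one h0 hgcd hnorm
  exact intCast_notMem_periodicZeros n (hn ▸ IsSelfSimilar.div_mem_periodicZeros hμ hR0 hξ ℓ₀ hm₀)
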